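/- (H²-Korn inequality.) For every smooth compactly supported vector field v = (v₁,v₂) ∈ C_c^∞(ℝ², ℝ²), ∫_{ℝ²} |ε(v)|² dx + ∫_{ℝ²} |∇ε(v)|² dx ≥ (1 − 1/√2) ( ∫_{ℝ²} |∇v|² dx + ∫_{ℝ²} |∇²v|² dx ). -/

import Mathlib

/-!
Pointwise, `|ε(v)|² = ½|∇v|² + ½(div v)² + (∂₂v₁ ∂₁v₂ - ∂₁v₁ ∂₂v₂)`, and the last term is a null
Lagrangian: integrating by parts once in each direction and using the symmetry of second
derivatives shows that it integrates to zero, so `∫ |ε(v)|² ≥ ½ ∫ |∇v|²`. Since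
`|∇ε(v)|² = |ε(∂₁v)|² + |ε(∂₂v)|²` and `|∇²v|² ≤ |∇∂₁v|² + |∇∂₂v|²`, the same bound for `∂₁v` and
`∂₂v` gives `∫ |∇ε(v)|² ≥ ½ ∫ |∇²v|²`. Finally `1 - 1/√2 < ½`.
-/

open MeasureTheory

/-- First partial derivative `∂₁ f` of `f : ℝ² → ℝ`. -/
noncomputable def pd1 (f : ℝ × ℝ → ℝ) : ℝ × ℝ → ℝ := fun x => fderiv ℝ f x (1, 0)

/-- Second partial derivative `∂₂ f` of `f : ℝ² → ℝ`. -/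
noncomputable def pd2 (f : ℝ × ℝ → ℝ) : ℝ × ℝ → ℝ := fun x => fderiv ℝ f x (0, 1)

/-- Squared Frobenius norm of the symmetric gradient (linearized strain):
`|ε(v)|² = |∂₁v₁|² + |∂₂v₂|² + (1/2)|∂₂v₁ + ∂₁v₂|²`. -/
noncomputable def epsSq (v1 v2 : ℝ × ℝ → ℝ) (x : ℝ × ℝ) : ℝ :=
  (pd1 v1 x) ^ 2 + (pd2 v2 x) ^ 2 + (1 / 2) * (pd2 v1 x + pd1 v2 x) ^ 2

/-- Squared gradient norm `|∇v|² = Σ_{i,j} |∂_j v_i|²`. -/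
noncomputable def gradSq (v1 v2 : ℝ × ℝ → ℝ) (x : ℝ × ℝ) : ℝ :=
  (pd1 v1 x) ^ 2 + (pd2 v1 x) ^ 2 + (pd1 v2 x) ^ 2 + (pd2 v2 x) ^ 2

/-- Squared Frobenius norm of the strain gradient `|∇ε(v)|²`. -/
noncomputable def gradEpsSq (v1 v2 : ℝ × ℝ → ℝ) (x : ℝ × ℝ) : ℝ :=
  (pd1 (pd1 v1) x) ^ 2 + (pd1 (pd2 v1) x) ^ 2 + (pd1 (pd2 v2) x) ^ 2 + (pd2 (pd2 v2) x) ^ 2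
    + (1 / 2) * (pd1 (pd2 v1) x + pd1 (pd1 v2) x) ^ 2
    + (1 / 2) * (pd1 (pd2 v2) x + pd2 (pd2 v1) x) ^ 2

/-- Squared Hessian norm `|∇²v|²`, each distinct second derivative counted once. -/
noncomputable def hessSq (v1 v2 : ℝ × ℝ → ℝ) (x : ℝ × ℝ) : ℝ :=
  (pd1 (pd1 v1) x) ^ 2 + (pd1 (pd2 v1) x) ^ 2 + (pd2 (pd2 v1) x) ^ 2
    + (pd1 (pd1 v2) x) ^ 2 + (pd1 (pd2 v2) x) ^ 2 + (pd2 (pd2 v2) x) ^ 2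

theorem integrable_mul_of_hasCompactSupport_left {X : Type*} [TopologicalSpace X]
    [MeasurableSpace X] [OpensMeasurableSpace X] {μ : Measure X} [IsFiniteMeasureOnCompacts μ]
    {f g : X → ℝ} (hf : Continuous f) (hg : Continuous g) (hcf : HasCompactSupport f) :
    Integrable (fun x => f x * g x) μ :=
  (hf.mul hg).integrable_of_hasCompactSupport hcf.mul_right

section IntegrationByParts

variable {E : Type*} [NormedAddCommGroup E] [NormedSpace ℝ E] [FiniteDimensional ℝ E]
  [MeasurableSpace E] [BorelSpace E] {μ : Measure E} [μ.IsAddHaarMeasure]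

theorem integral_mul_fderiv_apply_eq_neg {f g : E → ℝ} (hf : ContDiff ℝ 1 f)
    (hg : ContDiff ℝ 1 g) (hcf : HasCompactSupport f) (w : E) :
    ∫ x, f x * fderiv ℝ g x w ∂μ = -∫ x, fderiv ℝ f x w * g x ∂μ := by
  have hf' : Continuous (fderiv ℝ f · w) :=
    (hf.continuous_fderiv one_ne_zero).clm_apply continuous_const
  have hg' : Continuous (fderiv ℝ g · w) :=
    (hg.continuous_fderiv one_ne_zero).clm_apply continuous_const
  exact integral_mul_fderiv_eq_neg_fderiv_mul_of_integrable
    (integrable_mul_of_hasCompactSupport_left hf' hg.continuous (hcf.fderiv_apply ℝ w))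
    (integrable_mul_of_hasCompactSupport_left hf.continuous hg' hcf)
    (integrable_mul_of_hasCompactSupport_left hf.continuous hg.continuous hcf)
    (fun x _ => (hf.differentiable one_ne_zero).differentiableAt)
    (fun x _ => (hg.differentiable one_ne_zero).differentiableAt)

end IntegrationByParts

section PartialDerivatives

variable {f g : ℝ × ℝ → ℝ}

theorem contDiff_pd1 {m n : WithTop ℕ∞} (hf : ContDiff ℝ n f) (hmn : m + 1 ≤ n) :
    ContDiff ℝ m (pd1 f) :=
  (hf.fderiv_right hmn).clm_apply contDiff_const

theorem contDiff_pd2 {m n : WithTop ℕ∞} (hf : ContDiff ℝ n f) (hmn : m + 1 ≤ n) :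
    ContDiff ℝ m (pd2 f) :=
  (hf.fderiv_right hmn).clm_apply contDiff_const

theorem continuous_pd1 (hf : ContDiff ℝ 1 f) : Continuous (pd1 f) :=
  (contDiff_pd1 (m := 0) hf le_rfl).continuous

theorem continuous_pd2 (hf : ContDiff ℝ 1 f) : Continuous (pd2 f) :=
  (contDiff_pd2 (m := 0) hf le_rfl).continuous

theorem HasCompactSupport.pd1 (hf : HasCompactSupport f) : HasCompactSupport (pd1 f) :=
  hf.fderiv_apply ℝ _

theorem HasCompactSupport.pd2 (hf : HasCompactSupport f) : HasCompactSupport (pd2 f) :=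
  hf.fderiv_apply ℝ _

theorem pd1_eq_zero_of_notMem_tsupport {x : ℝ × ℝ} (hx : x ∉ tsupport f) : pd1 f x = 0 := by
  simp [pd1, fderiv_of_notMem_tsupport ℝ hx]

theorem pd2_eq_zero_of_notMem_tsupport {x : ℝ × ℝ} (hx : x ∉ tsupport f) : pd2 f x = 0 := by
  simp [pd2, fderiv_of_notMem_tsupport ℝ hx]

theorem pd2_pd1 (hf : ContDiff ℝ 2 f) : pd2 (pd1 f) = pd1 (pd2 f) := by
  funext x
  have hdiff : DifferentiableAt ℝ (fderiv ℝ f) x :=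
    ((hf.fderiv_right (m := 1) le_rfl).differentiable one_ne_zero).differentiableAt
  have hsymm : IsSymmSndFDerivAt ℝ f x :=
    hf.contDiffAt.isSymmSndFDerivAt (by simp)
  have hpartial (v w : ℝ × ℝ) :
      fderiv ℝ (fderiv ℝ f · v) x w = fderiv ℝ (fderiv ℝ f) x w v := by
    simp [fderiv_clm_apply hdiff (differentiableAt_const v)]
  exact (hpartial _ _).trans ((hsymm _ _).trans (hpartial _ _).symm)

theorem integral_pd2_mul_pd1_eq (hf : ContDiff ℝ 2 f) (hg : ContDiff ℝ 1 g)
    (hcf : HasCompactSupport f) :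
    ∫ x, pd2 f x * pd1 g x = ∫ x, pd1 f x * pd2 g x := by
  have hf1 : ContDiff ℝ 1 (pd1 f) := contDiff_pd1 hf (by norm_num)
  have hf2 : ContDiff ℝ 1 (pd2 f) := contDiff_pd2 hf (by norm_num)
  calc ∫ x, pd2 f x * pd1 g x
      = -∫ x, pd1 (pd2 f) x * g x := integral_mul_fderiv_apply_eq_neg hf2 hg hcf.pd2 _
    _ = -∫ x, pd2 (pd1 f) x * g x := by rw [pd2_pd1 hf]
    _ = ∫ x, pd1 f x * pd2 g x := (integral_mul_fderiv_apply_eq_neg hf1 hg hcf.pd1 _).symm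

end PartialDerivatives

section Korn

variable {v1 v2 : ℝ × ℝ → ℝ}

theorem continuous_epsSq (h1 : ContDiff ℝ 1 v1) (h2 : ContDiff ℝ 1 v2) :
    Continuous (epsSq v1 v2) := by
  have := continuous_pd1 h1; have := continuous_pd2 h1
  have := continuous_pd1 h2; have := continuous_pd2 h2
  unfold epsSq
  fun_prop

theorem continuous_gradSq (h1 : ContDiff ℝ 1 v1) (h2 : ContDiff ℝ 1 v2) :
    Continuous (gradSq v1 v2) := by
  have := continuous_pd1 h1; have := continuous_pd2 h1
  have := continuous_pd1 h2; have := continuous_pd2 h2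
  unfold gradSq
  fun_prop

theorem integrable_epsSq (h1 : ContDiff ℝ 1 v1) (h2 : ContDiff ℝ 1 v2)
    (hc1 : HasCompactSupport v1) (hc2 : HasCompactSupport v2) : Integrable (epsSq v1 v2) := by
  refine (continuous_epsSq h1 h2).integrable_of_hasCompactSupport <|
    HasCompactSupport.intro (IsCompact.union hc1 hc2) fun x hx => ?_
  rw [Set.mem_union, not_or] at hx
  simp [epsSq, pd1_eq_zero_of_notMem_tsupport hx.1, pd2_eq_zero_of_notMem_tsupport hx.1,
    pd1_eq_zero_of_notMem_tsupport hx.2, pd2_eq_zero_of_notMem_tsupport hx.2]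

theorem integrable_gradSq (h1 : ContDiff ℝ 1 v1) (h2 : ContDiff ℝ 1 v2)
    (hc1 : HasCompactSupport v1) (hc2 : HasCompactSupport v2) : Integrable (gradSq v1 v2) := by
  refine (continuous_gradSq h1 h2).integrable_of_hasCompactSupport <|
    HasCompactSupport.intro (IsCompact.union hc1 hc2) fun x hx => ?_
  rw [Set.mem_union, not_or] at hx
  simp [gradSq, pd1_eq_zero_of_notMem_tsupport hx.1, pd2_eq_zero_of_notMem_tsupport hx.1,
    pd1_eq_zero_of_notMem_tsupport hx.2, pd2_eq_zero_of_notMem_tsupport hx.2]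

theorem half_integral_gradSq_le_integral_epsSq (h1 : ContDiff ℝ 2 v1) (h2 : ContDiff ℝ 2 v2)
    (hc1 : HasCompactSupport v1) (hc2 : HasCompactSupport v2) :
    (1 / 2) * ∫ x, gradSq v1 v2 x ≤ ∫ x, epsSq v1 v2 x := by
  have h1' : ContDiff ℝ 1 v1 := h1.of_le (by norm_num)
  have h2' : ContDiff ℝ 1 v2 := h2.of_le (by norm_num)
  have hcd : Integrable fun x => pd2 v1 x * pd1 v2 x :=
    integrable_mul_of_hasCompactSupport_left (continuous_pd2 h1') (continuous_pd1 h2') hc1.pd2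
  have hab : Integrable fun x => pd1 v1 x * pd2 v2 x :=
    integrable_mul_of_hasCompactSupport_left (continuous_pd1 h1') (continuous_pd2 h2') hc1.pd1
  have hpointwise (x : ℝ × ℝ) :
      (1 / 2) * gradSq v1 v2 x + (pd2 v1 x * pd1 v2 x - pd1 v1 x * pd2 v2 x) ≤ epsSq v1 v2 x := by
    unfold gradSq epsSq
    nlinarith [sq_nonneg (pd1 v1 x + pd2 v2 x)]
  have hgrad : Integrable fun x => (1 / 2) * gradSq v1 v2 x :=
    (integrable_gradSq h1' h2' hc1 hc2).const_mul _
  have hnull : Integrable fun x => pd2 v1 x * pd1 v2 x - pd1 v1 x * pd2 v2 x := hcd.sub hab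
  calc (1 / 2) * ∫ x, gradSq v1 v2 x
      = ∫ x, (1 / 2) * gradSq v1 v2 x + (pd2 v1 x * pd1 v2 x - pd1 v1 x * pd2 v2 x) := by
        rw [integral_add hgrad hnull, integral_sub hcd hab, integral_const_mul,
          integral_pd2_mul_pd1_eq h1 h2' hc1, sub_self, add_zero]
    _ ≤ ∫ x, epsSq v1 v2 x :=
        integral_mono (hgrad.add hnull) (integrable_epsSq h1' h2' hc1 hc2) hpointwise

theorem gradEpsSq_eq_epsSq_pd1_add_epsSq_pd2 (h1 : ContDiff ℝ 2 v1) (h2 : ContDiff ℝ 2 v2)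
    (x : ℝ × ℝ) :
    gradEpsSq v1 v2 x = epsSq (pd1 v1) (pd1 v2) x + epsSq (pd2 v1) (pd2 v2) x := by
  simp only [gradEpsSq, epsSq, pd2_pd1 h1, pd2_pd1 h2]
  ring

theorem hessSq_le_gradSq_pd1_add_gradSq_pd2 (h1 : ContDiff ℝ 2 v1) (h2 : ContDiff ℝ 2 v2)
    (x : ℝ × ℝ) :
    hessSq v1 v2 x ≤ gradSq (pd1 v1) (pd1 v2) x + gradSq (pd2 v1) (pd2 v2) x := by
  simp only [hessSq, gradSq, pd2_pd1 h1, pd2_pd1 h2]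
  nlinarith [sq_nonneg (pd1 (pd2 v1) x), sq_nonneg (pd1 (pd2 v2) x)]

theorem half_integral_hessSq_le_integral_gradEpsSq (h1 : ContDiff ℝ 3 v1)
    (h2 : ContDiff ℝ 3 v2) (hc1 : HasCompactSupport v1) (hc2 : HasCompactSupport v2) :
    (1 / 2) * ∫ x, hessSq v1 v2 x ≤ ∫ x, gradEpsSq v1 v2 x := by
  have h11 : ContDiff ℝ 2 (pd1 v1) := contDiff_pd1 h1 (by norm_num)
  have h21 : ContDiff ℝ 2 (pd2 v1) := contDiff_pd2 h1 (by norm_num)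
  have h12 : ContDiff ℝ 2 (pd1 v2) := contDiff_pd1 h2 (by norm_num)
  have h22 : ContDiff ℝ 2 (pd2 v2) := contDiff_pd2 h2 (by norm_num)
  have h1' : ContDiff ℝ 2 v1 := h1.of_le (by norm_num)
  have h2' : ContDiff ℝ 2 v2 := h2.of_le (by norm_num)
  have hgrad1 := integrable_gradSq (h11.of_le one_le_two) (h12.of_le one_le_two) hc1.pd1 hc2.pd1
  have hgrad2 := integrable_gradSq (h21.of_le one_le_two) (h22.of_le one_le_two) hc1.pd2 hc2.pd2
  have heps1 := integrable_epsSq (h11.of_le one_le_two) (h12.of_le one_le_two) hc1.pd1 hc2.pd1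
  have heps2 := integrable_epsSq (h21.of_le one_le_two) (h22.of_le one_le_two) hc1.pd2 hc2.pd2
  calc (1 / 2) * ∫ x, hessSq v1 v2 x
      ≤ (1 / 2) * ∫ x, gradSq (pd1 v1) (pd1 v2) x + gradSq (pd2 v1) (pd2 v2) x := by
        refine mul_le_mul_of_nonneg_left ?_ (by norm_num)
        exact integral_mono_of_nonneg (.of_forall fun x => by unfold hessSq; positivity)
          (hgrad1.add hgrad2) (.of_forall (hessSq_le_gradSq_pd1_add_gradSq_pd2 h1' h2'))
    _ = (1 / 2) * (∫ x, gradSq (pd1 v1) (pd1 v2) x) + (1 / 2) * ∫ x, gradSq (pd2 v1) (pd2 v2) x := by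
        rw [integral_add hgrad1 hgrad2, mul_add]
    _ ≤ (∫ x, epsSq (pd1 v1) (pd1 v2) x) + ∫ x, epsSq (pd2 v1) (pd2 v2) x :=
        add_le_add (half_integral_gradSq_le_integral_epsSq h11 h12 hc1.pd1 hc2.pd1)
          (half_integral_gradSq_le_integral_epsSq h21 h22 hc1.pd2 hc2.pd2)
    _ = ∫ x, gradEpsSq v1 v2 x := by
        simp_rw [gradEpsSq_eq_epsSq_pd1_add_epsSq_pd2 h1' h2']
        exact (integral_add heps1 heps2).symm

end Korn

/-- H²-Korn inequality: for every smooth compactly supported vector field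
`v = (v₁,v₂) ∈ C_c^∞(ℝ², ℝ²)`,
`∫ |ε(v)|² + ∫ |∇ε(v)|² ≥ (1 − 1/√2) (∫ |∇v|² + ∫ |∇²v|²)`. -/
theorem h2_korn_inequality (v1 v2 : ℝ × ℝ → ℝ)
    (h1 : ContDiff ℝ (⊤ : ℕ∞) v1) (h2 : ContDiff ℝ (⊤ : ℕ∞) v2)
    (hc1 : HasCompactSupport v1) (hc2 : HasCompactSupport v2) :
    (∫ x : ℝ × ℝ, epsSq v1 v2 x) + ∫ x : ℝ × ℝ, gradEpsSq v1 v2 x ≥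
      (1 - 1 / Real.sqrt 2) *
        ((∫ x : ℝ × ℝ, gradSq v1 v2 x) + ∫ x : ℝ × ℝ, hessSq v1 v2 x) := by
  have h1' : ContDiff ℝ 3 v1 := h1.of_le (WithTop.coe_le_coe.mpr le_top)
  have h2' : ContDiff ℝ 3 v2 := h2.of_le (WithTop.coe_le_coe.mpr le_top)
  have hfirst := half_integral_gradSq_le_integral_epsSq (h1'.of_le (by norm_num))
    (h2'.of_le (by norm_num)) hc1 hc2
  have hsecond := half_integral_hessSq_le_integral_gradEpsSq h1' h2' hc1 hc2
  have hnonneg : 0 ≤ (∫ x, gradSq v1 v2 x) + ∫ x, hessSq v1 v2 x :=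
    add_nonneg (integral_nonneg fun x => by unfold gradSq; positivity)
      (integral_nonneg fun x => by unfold hessSq; positivity)
  have hconst : 1 - 1 / Real.sqrt 2 ≤ 1 / 2 := by
    have hsqrt : Real.sqrt 2 ≤ 2 := Real.sqrt_le_iff.mpr ⟨by norm_num, by norm_num⟩
    have := one_div_le_one_div_of_le (Real.sqrt_pos.mpr two_pos) hsqrt
    linarith
  calc (1 - 1 / Real.sqrt 2) * ((∫ x, gradSq v1 v2 x) + ∫ x, hessSq v1 v2 x)
      ≤ (1 / 2) * ((∫ x, gradSq v1 v2 x) + ∫ x, hessSq v1 v2 x) :=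
        mul_le_mul_of_nonneg_right hconst hnonneg
    _ ≤ (∫ x, epsSq v1 v2 x) + ∫ x, gradEpsSq v1 v2 x := by linarith
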